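/- arXiv:1004.3363 — 5 statements merged into one kernel-verified Lean document; each statement's English description precedes it below -/
import Mathlib

section
/- Let D be a finite directed graph in which every vertex has in-degree at most 1 or out-degree at most 1 (a unit network) with unit edge capacities, distinguished source s and sink t, and suppose every s-t path has length at least d where d > 4. Then the value of the maximum s-t flow is at most 2n/(d-2), where n is the number of vertices other than s and t. -/
open Finset

/-- `IsPath A s t l` means the list `l` of vertices forms a directed path from
`s` to `t` along the edge relation `A`. -/
def IsDipath {X : Type*} (A : X → X → Prop) (s t : X) (l : List X) : Prop :=
  l.Chain' A ∧ l.head? = some s ∧ l.getLast? = some t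

/-!
Let `R i` be the set of vertices reachable from `s` by a path with at most `i` edges. For
`i + 1 < d` the set `R (i + 1)` contains `s` but not `t`, so the whole flow value `F` leaves it;
every edge leaving `R (i + 1)` starts in the layer `R (i + 1) \ R i`, whose vertices are internal
and, in a unit network with unit capacities, carry at most one unit each. Hence each of the
`d - 1` disjoint layers has at least `F` vertices, so `(d - 1) F ≤ n`, which is stronger than
the claimed `(d - 2) F ≤ 2 n`.
-/

theorem IsDipath.concat {X : Type*} {A : X → X → Prop} {s u v : X} {l : List X}
    (hl : IsDipath A s u l) (huv : A u v) : IsDipath A s v (l ++ [v]) := by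
  obtain ⟨hchain, hhead, hlast⟩ := hl
  refine ⟨List.isChain_append.2 ⟨hchain, List.isChain_singleton v, ?_⟩, ?_, by simp⟩
  · simpa [hlast] using huv
  · cases l with
    | nil => simp at hhead
    | cons a l => simpa using hhead

section UnitNetwork

variable {X : Type*} [Fintype X]

open Classical in
noncomputable def reachWithin (A : X → X → Prop) (s : X) (i : ℕ) : Finset X :=
  univ.filter fun v => ∃ l : List X, IsDipath A s v l ∧ l.length ≤ i + 1

def netFlow (f : X → X → ℕ) (v : X) : ℤ :=
  ∑ u, (f v u : ℤ) - ∑ u, (f u v : ℤ)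

variable {A : X → X → Prop} {s t : X} {f : X → X → ℕ}

theorem mem_reachWithin {v : X} {i : ℕ} :
    v ∈ reachWithin A s i ↔ ∃ l : List X, IsDipath A s v l ∧ l.length ≤ i + 1 := by
  simp [reachWithin]

theorem self_mem_reachWithin (i : ℕ) : s ∈ reachWithin A s i :=
  mem_reachWithin.2 ⟨[s], ⟨List.isChain_singleton s, rfl, rfl⟩, by simp⟩

theorem reachWithin_mono : Monotone (reachWithin A s) := fun i j hij v hv => by
  obtain ⟨l, hl, hlen⟩ := mem_reachWithin.1 hv
  exact mem_reachWithin.2 ⟨l, hl, by omega⟩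

theorem mem_reachWithin_succ {u v : X} {i : ℕ} (hu : u ∈ reachWithin A s i) (huv : A u v) :
    v ∈ reachWithin A s (i + 1) := by
  obtain ⟨l, hl, hlen⟩ := mem_reachWithin.1 hu
  exact mem_reachWithin.2 ⟨l ++ [v], hl.concat huv, by simp; omega⟩

theorem notMem_reachWithin_of_lt {d i : ℕ}
    (hdist : ∀ l : List X, IsDipath A s t l → d ≤ l.length - 1) (hi : i < d) :
    t ∉ reachWithin A s i := fun ht => by
  obtain ⟨l, hl, hlen⟩ := mem_reachWithin.1 ht
  have := hdist l hl
  omega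

section Cut

variable [DecidableEq X]

theorem sum_netFlow_eq (S : Finset X) :
    ∑ v ∈ S, netFlow f v
      = ∑ u ∈ S, ∑ v ∈ Sᶜ, (f u v : ℤ) - ∑ u ∈ S, ∑ v ∈ Sᶜ, (f v u : ℤ) := by
  have split : ∀ g : X → X → ℤ,
      ∑ v ∈ S, ∑ u, g v u = ∑ v ∈ S, ∑ u ∈ S, g v u + ∑ v ∈ S, ∑ u ∈ Sᶜ, g v u := fun g => by
    rw [← sum_add_distrib]
    exact sum_congr rfl fun v _ => (sum_add_sum_compl S _).symm
  simp only [netFlow, sum_sub_distrib]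
  rw [split, split fun v u => (f u v : ℤ), sum_comm (s := S) (t := S) (f := fun v u => (f u v : ℤ))]
  ring

theorem netFlow_le_sum_compl {S : Finset X} (hs : s ∈ S)
    (hcons : ∀ v ∈ S, v ≠ s → ∑ u, f u v = ∑ u, f v u) :
    netFlow f s ≤ ∑ u ∈ S, ∑ v ∈ Sᶜ, (f u v : ℤ) := by
  have hsum : ∑ v ∈ S, netFlow f v = netFlow f s :=
    sum_eq_single_of_mem s hs fun v hv hvs => by
      simp only [netFlow, ← Nat.cast_sum, hcons v hv hvs, sub_self]
  have hin : 0 ≤ ∑ u ∈ S, ∑ v ∈ Sᶜ, (f v u : ℤ) := by positivity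
  linarith [sum_netFlow_eq (f := f) S]

theorem netFlow_le_card {S T : Finset X} (hs : s ∈ S) (hTS : T ⊆ S)
    (hcons : ∀ v ∈ S, v ≠ s → ∑ u, f u v = ∑ u, f v u)
    (hleave : ∀ u ∈ S, u ∉ T → ∀ v ∉ S, f u v = 0) (hout : ∀ u ∈ T, ∑ v, f u v ≤ 1) :
    netFlow f s ≤ #T :=
  calc netFlow f s ≤ ∑ u ∈ S, ∑ v ∈ Sᶜ, (f u v : ℤ) := netFlow_le_sum_compl hs hcons
    _ = ∑ u ∈ T, ∑ v ∈ Sᶜ, (f u v : ℤ) :=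
      (sum_subset hTS fun u hu huT => sum_eq_zero fun v hv => by
        simp [hleave u hu huT v (mem_compl.1 hv)]).symm
    _ ≤ ∑ _u ∈ T, 1 := sum_le_sum fun u hu => by
      exact_mod_cast (sum_le_sum_of_subset (subset_univ Sᶜ)).trans (hout u hu)
    _ = #T := by simp

end Cut

theorem sum_le_one_of_ncard_le_one {g : X → ℕ} {P : Set X} (hP : P.ncard ≤ 1)
    (hg : ∀ u ∉ P, g u = 0) (hg1 : ∀ u, g u ≤ 1) : ∑ u, g u ≤ 1 := by
  classical
  calc ∑ u, g u = ∑ u ∈ P.toFinset, g u :=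
        (sum_subset (subset_univ _) fun u _ hu => hg u (by simpa using hu)).symm
    _ ≤ #P.toFinset • 1 := sum_le_card_nsmul _ _ _ fun u _ => hg1 u
    _ ≤ 1 := by rwa [smul_eq_mul, mul_one, ← Set.ncard_eq_toFinset_card']

theorem outflow_le_one (hcap : ∀ x y, f x y ≤ 1) (hsupp : ∀ x y, ¬ A x y → f x y = 0) {v : X}
    (hcons : ∑ u, f u v = ∑ u, f v u) (hunit : {u | A u v}.ncard ≤ 1 ∨ {u | A v u}.ncard ≤ 1) :
    ∑ u, f v u ≤ 1 := by
  rcases hunit with hin | hout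
  · exact hcons ▸ sum_le_one_of_ncard_le_one hin (fun u hu => hsupp u v hu) (hcap · v)
  · exact sum_le_one_of_ncard_le_one hout (fun u hu => hsupp v u hu) (hcap v)

theorem netFlow_le_card_reachWithin_succ_sub (hsupp : ∀ x y, ¬ A x y → f x y = 0)
    (hcons : ∀ v, v ≠ s → v ≠ t → ∑ u, f u v = ∑ u, f v u)
    (hout : ∀ v, v ≠ s → v ≠ t → ∑ u, f v u ≤ 1) {i : ℕ} (ht : t ∉ reachWithin A s (i + 1)) :
    netFlow f s ≤ #(reachWithin A s (i + 1)) - #(reachWithin A s i) := by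
  classical
  have hsub : reachWithin A s i ⊆ reachWithin A s (i + 1) := reachWithin_mono i.le_succ
  rw [← Nat.cast_sub (card_le_card hsub), ← card_sdiff_of_subset hsub]
  refine netFlow_le_card (self_mem_reachWithin _) sdiff_subset
    (fun v hv hvs => hcons v hvs (ne_of_mem_of_not_mem hv ht)) (fun u hu huT v hv => ?_)
    (fun u hu => ?_)
  · have hui : u ∈ reachWithin A s i := not_not.1 fun h => huT (mem_sdiff.2 ⟨hu, h⟩)
    exact hsupp u v fun huv => hv (mem_reachWithin_succ hui huv)
  · obtain ⟨hu, hui⟩ := mem_sdiff.1 hu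
    exact hout u (ne_of_mem_of_not_mem (self_mem_reachWithin i) hui).symm
      (ne_of_mem_of_not_mem hu ht)

theorem mul_netFlow_le_card_reachWithin (hsupp : ∀ x y, ¬ A x y → f x y = 0)
    (hcons : ∀ v, v ≠ s → v ≠ t → ∑ u, f u v = ∑ u, f v u)
    (hout : ∀ v, v ≠ s → v ≠ t → ∑ u, f v u ≤ 1) {m : ℕ} (ht : t ∉ reachWithin A s m) :
    m * netFlow f s ≤ #(reachWithin A s m) - #(reachWithin A s 0) := by
  induction m with
  | zero => simp
  | succ m ih =>
    have ht' : t ∉ reachWithin A s m := fun h => ht (reachWithin_mono m.le_succ h)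
    have hlayer := netFlow_le_card_reachWithin_succ_sub hsupp hcons hout ht
    push_cast
    linarith [ih ht']

end UnitNetwork

theorem unit_network_flow_bound_general {X : Type*} [Fintype X]
    (A : X → X → Prop) (s t : X)
    (hunit : ∀ v : X, v ≠ s → v ≠ t →
      {u : X | A u v}.ncard ≤ 1 ∨ {u : X | A v u}.ncard ≤ 1)
    (d : ℕ) (hd : 4 < d)
    (hdist : ∀ l : List X, IsDipath A s t l → d ≤ l.length - 1)
    (f : X → X → ℕ)
    (hcap : ∀ x y : X, f x y ≤ 1)
    (hsupp : ∀ x y : X, ¬ A x y → f x y = 0)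
    (hcons : ∀ v : X, v ≠ s → v ≠ t → ∑ u : X, f u v = ∑ u : X, f v u) :
    ((∑ u : X, f s u : ℤ) - ∑ u : X, f u s) * ((d : ℤ) - 2)
      ≤ 2 * ((Fintype.card X : ℤ) - 2) := by
  have hout : ∀ v, v ≠ s → v ≠ t → ∑ u, f v u ≤ 1 := fun v hvs hvt =>
    outflow_le_one hcap hsupp (hcons v hvs hvt) (hunit v hvs hvt)
  have hfar : t ∉ reachWithin A s (d - 1) := notMem_reachWithin_of_lt hdist (by omega)
  have hlayers := mul_netFlow_le_card_reachWithin hsupp hcons hout hfar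
  have hs : 1 ≤ #(reachWithin A s 0) := card_pos.2 ⟨s, self_mem_reachWithin 0⟩
  have hmono : #(reachWithin A s 0) ≤ #(reachWithin A s (d - 1)) :=
    card_le_card (reachWithin_mono (Nat.zero_le _))
  have ht : #(reachWithin A s (d - 1)) < Fintype.card X := card_lt_univ_of_notMem hfar
  have hsharp : ((d : ℤ) - 1) * netFlow f s ≤ Fintype.card X - 2 := by
    push_cast [Nat.cast_sub (by omega : 1 ≤ d)] at hlayers
    omega
  have hF : netFlow f s = (∑ u, f s u : ℤ) - ∑ u, f u s := by simp [netFlow]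
  rw [← hF]
  nlinarith

/-- In a unit-capacity unit network (every internal vertex has in-degree ≤ 1 or
out-degree ≤ 1) in which every `s`-`t` path has at least `d > 4` edges, the value
of any (hence the maximum) `s`-`t` flow is at most `2n/(d-2)`, where `n` is the
number of vertices other than `s` and `t`. -/
theorem unit_network_flow_bound {X : Type*} [Fintype X] [DecidableEq X]
    (A : X → X → Prop) (s t : X) (hst : s ≠ t)
    (hunit : ∀ v : X, v ≠ s → v ≠ t →
      {u : X | A u v}.ncard ≤ 1 ∨ {u : X | A v u}.ncard ≤ 1)
    (d : ℕ) (hd : 4 < d)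
    (hdist : ∀ l : List X, IsDipath A s t l → d ≤ l.length - 1)
    (f : X → X → ℕ)
    (hcap : ∀ x y : X, f x y ≤ 1)
    (hsupp : ∀ x y : X, ¬ A x y → f x y = 0)
    (hcons : ∀ v : X, v ≠ s → v ≠ t → ∑ u : X, f u v = ∑ u : X, f v u) :
    ((∑ u : X, f s u : ℤ) - ∑ u : X, f u s) * ((d : ℤ) - 2)
      ≤ 2 * ((Fintype.card X : ℤ) - 2) :=
  unit_network_flow_bound_general A s t hunit d hd hdist f hcap hsupp hcons
end

section
/- Let N be the flow network obtained from a bipartite graph G = (U ∪ V, E) by the semi-matching reduction (source s, jobs U, machines V, cost centers C, sink t), and let f be a residual graph of a maximum flow with unit capacities. If every path from s to t in the residual graph has length at least d > 4, then the maximum residual flow value is at most 2|U|/(d-4). -/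
open Finset

namespace List

variable {α β : Type*}

theorem map_fst_zip_tail : ∀ l : List α, (l.zip l.tail).map Prod.fst = l.dropLast
  | [] | [_] => rfl
  | a :: b :: l => congrArg (a :: ·) (map_fst_zip_tail (b :: l))

theorem sum_count_prodMk_left [DecidableEq α] [DecidableEq β] [Fintype β] (L : List (α × β))
    (a : α) :
    ∑ b, L.count (a, b) = (L.map Prod.fst).count a := by
  induction L with
  | nil => simp
  | cons p L ih =>
    obtain ⟨a', b'⟩ := p
    by_cases h : a' = a <;> simp [count_cons, sum_add_distrib, ih, h]

theorem sum_count_prodMk_right [DecidableEq α] [DecidableEq β] [Fintype α] (L : List (α × β))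
    (b : β) :
    ∑ a, L.count (a, b) = (L.map Prod.snd).count b := by
  induction L with
  | nil => simp
  | cons p L ih =>
    obtain ⟨a', b'⟩ := p
    by_cases h : b' = b <;> simp [count_cons, sum_add_distrib, ih, h]

theorem sum_count_eq_length_filter [DecidableEq α] (l : List α) (S : Finset α) :
    ∑ a ∈ S, l.count a = (l.filter (· ∈ S)).length := by
  have h := Multiset.sum_count_eq_card (s := S) (m := (l.filter (· ∈ S) : Multiset α)) (by simp)
  simp only [Multiset.coe_count, Multiset.coe_card] at h
  rw [← h]
  exact Finset.sum_congr rfl fun a ha => by simp [count_filter, ha]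

theorem IsChain.rel_of_mem_zip_tail {R : α → α → Prop} :
    ∀ {l : List α}, l.IsChain R → ∀ {a b : α}, (a, b) ∈ l.zip l.tail → R a b
  | [], _, _, _, h | [_], _, _, _, h => by simp at h
  | x :: y :: l, hc, a, b, h => by
    rw [isChain_cons_cons] at hc
    rcases mem_cons.1 h with h | h
    · obtain ⟨rfl, rfl⟩ := Prod.mk.inj h
      exact hc.1
    · exact rel_of_mem_zip_tail hc.2 h

end List

theorem IsDipath.mono {X : Type*} {R R' : X → X → Prop} {s t : X} {l : List X}
    (h : ∀ x y, R x y → R' x y) (hl : IsDipath R s t l) : IsDipath R' s t l :=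
  ⟨hl.1.imp h, hl.2⟩

theorem Relation.ReflTransGen.exists_isDipath_nodup {X : Type*} {R : X → X → Prop} {s t : X}
    (h : Relation.ReflTransGen R s t) : ∃ l, IsDipath R s t l ∧ l.Nodup := by
  induction h using Relation.ReflTransGen.head_induction_on with
  | refl => exact ⟨[t], ⟨List.isChain_singleton _, rfl, rfl⟩, List.nodup_singleton _⟩
  | @head a b hab _ ih =>
    obtain ⟨l, ⟨hc, hh, hl⟩, hnd⟩ := ih
    by_cases ha : a ∈ l
    · obtain ⟨l₁, l₂, rfl⟩ := List.append_of_mem ha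
      refine ⟨a :: l₂, ⟨hc.suffix (List.suffix_append _ _), rfl, ?_⟩,
        hnd.sublist (List.sublist_append_right _ _)⟩
      rwa [List.getLast?_append_cons] at hl
    · obtain ⟨l', rfl⟩ : ∃ l', l = b :: l' := by
        cases l <;> simp_all
      exact ⟨a :: b :: l', ⟨hc.cons_cons hab, rfl, by simpa using hl⟩,
        List.nodup_cons.2 ⟨ha, hnd⟩⟩

section Flow

variable {X : Type*} [Fintype X]

def netOut (g : X → X → ℕ) (v : X) : ℤ := ∑ u, (g v u : ℤ) - ∑ u, (g u v : ℤ)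

def IsFlow (g : X → X → ℕ) (s t : X) : Prop := ∀ v, v ≠ s → v ≠ t → netOut g v = 0

theorem netOut_sub {g h : X → X → ℕ} (hle : h ≤ g) (v : X) :
    netOut (g - h) v = netOut g v - netOut h v := by
  simp only [netOut, Pi.sub_apply, Nat.cast_sub (hle _ _), sum_sub_distrib]
  ring

theorem IsFlow.sub {g h : X → X → ℕ} {s t : X} (hg : IsFlow g s t) (hh : IsFlow h s t)
    (hle : h ≤ g) : IsFlow (g - h) s t := fun v hs ht => by
  rw [netOut_sub hle, hg v hs ht, hh v hs ht, sub_zero]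

variable [DecidableEq X]

theorem sum_netOut_eq_sum_cut (g : X → X → ℕ) (S : Finset X) :
    ∑ v ∈ S, netOut g v = ∑ v ∈ S, ∑ u ∈ Sᶜ, ((g v u : ℤ) - g u v) := by
  have hinside : ∑ v ∈ S, ∑ u ∈ S, ((g v u : ℤ) - g u v) = 0 := by
    simp only [sum_sub_distrib]
    rw [sum_comm, sub_self]
  calc ∑ v ∈ S, netOut g v = ∑ v ∈ S, ∑ u, ((g v u : ℤ) - g u v) := by
        simp only [netOut, sum_sub_distrib]
    _ = ∑ v ∈ S, ∑ u ∈ S, ((g v u : ℤ) - g u v) +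
          ∑ v ∈ S, ∑ u ∈ Sᶜ, ((g v u : ℤ) - g u v) := by
        rw [← sum_add_distrib]
        exact sum_congr rfl fun v _ => (sum_add_sum_compl S _).symm
    _ = _ := by rw [hinside, zero_add]

theorem IsFlow.netOut_eq_sum_cut {g : X → X → ℕ} {s t : X} (hg : IsFlow g s t) {S : Finset X}
    (hs : s ∈ S) (ht : t ∉ S) :
    netOut g s = ∑ v ∈ S, ∑ u ∈ Sᶜ, ((g v u : ℤ) - g u v) := by
  rw [← sum_netOut_eq_sum_cut, sum_eq_single_of_mem s hs]
  exact fun v hv hvs => hg v hvs (ne_of_mem_of_not_mem hv ht)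

theorem IsFlow.reflTransGen_of_netOut_pos {g : X → X → ℕ} {s t : X} (hg : IsFlow g s t)
    (hpos : 0 < netOut g s) : Relation.ReflTransGen (fun x y => 0 < g x y) s t := by
  classical
  by_contra hst
  set S := univ.filter (Relation.ReflTransGen (fun x y => 0 < g x y) s)
  have hcut : ∀ v ∈ S, ∀ u ∈ Sᶜ, g v u = 0 := by
    intro v hv u hu
    by_contra h
    simp only [S, mem_compl, mem_filter, mem_univ, true_and] at hv hu
    exact hu (hv.tail (Nat.pos_of_ne_zero h))
  have hnet := hg.netOut_eq_sum_cut (S := S) (mem_filter.2 ⟨mem_univ _, .refl⟩)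
    (by simpa [S] using hst)
  have hcut_nonpos : ∑ v ∈ S, ∑ u ∈ Sᶜ, ((g v u : ℤ) - g u v) ≤ 0 :=
    sum_nonpos fun v hv => sum_nonpos fun u hu => by simp [hcut v hv u hu]
  omega

def pathFlow (l : List X) (x y : X) : ℕ := (l.zip l.tail).count (x, y)

theorem sum_pathFlow_left (l : List X) (x : X) : ∑ y, pathFlow l x y = l.dropLast.count x := by
  simp only [pathFlow]
  rw [List.sum_count_prodMk_left, List.map_fst_zip_tail]

theorem sum_pathFlow_right (l : List X) (y : X) : ∑ x, pathFlow l x y = l.tail.count y := by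
  simp only [pathFlow]
  rw [List.sum_count_prodMk_right, List.map_snd_zip (by simp)]

theorem netOut_pathFlow {l : List X} {s t : X} (hs : l.head? = some s) (ht : l.getLast? = some t)
    (v : X) : netOut (pathFlow l) v = (if s = v then 1 else 0) - (if t = v then 1 else 0) := by
  have hdrop : l.dropLast.count v + (if t = v then 1 else 0) = l.count v := by
    conv_rhs => rw [← List.dropLast_append_getLast? t ht]
    simp [List.count_singleton]
  have htail : l.tail.count v + (if s = v then 1 else 0) = l.count v := by
    obtain ⟨r, rfl⟩ := List.head?_eq_some_iff.1 hs
    simp [List.count_cons]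
  simp only [netOut, ← Nat.cast_sum, sum_pathFlow_left, sum_pathFlow_right]
  split_ifs at hdrop htail ⊢ <;> omega

theorem pathFlow_le {g : X → X → ℕ} {l : List X} (hc : l.IsChain (fun x y => 0 < g x y))
    (hnd : l.Nodup) : pathFlow l ≤ g := by
  intro x y
  rcases Nat.eq_zero_or_pos (pathFlow l x y) with h | h
  · simp [h]
  calc pathFlow l x y ≤ ∑ y', pathFlow l x y' := single_le_sum (by simp) (mem_univ _)
    _ = l.dropLast.count x := sum_pathFlow_left l x
    _ ≤ l.count x := (List.dropLast_sublist l).count_le x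
    _ ≤ 1 := List.nodup_iff_count.1 hnd x
    _ ≤ g x y := hc.rel_of_mem_zip_tail (List.count_pos_iff.1 h)

theorem IsFlow.exists_paths {g : X → X → ℕ} {s t : X} (hg : IsFlow g s t) (n : ℕ)
    (hn : (n : ℤ) ≤ netOut g s) : ∃ p : Fin n → List X,
      (∀ i, IsDipath (fun x y => 0 < g x y) s t (p i)) ∧
        ∀ x y, ∑ i, pathFlow (p i) x y ≤ g x y := by
  induction n generalizing g with
  | zero => exact ⟨Fin.elim0, fun i => i.elim0, fun _ _ => by simp⟩
  | succ n ih =>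
    obtain ⟨l, ⟨hc, hs, ht⟩, hnd⟩ :=
      (hg.reflTransGen_of_netOut_pos (by omega)).exists_isDipath_nodup
    have hle := pathFlow_le hc hnd
    have hnet := netOut_pathFlow hs ht
    have hflow : IsFlow (g - pathFlow l) s t :=
      hg.sub (fun v hvs hvt => by simp [hnet, hvs.symm, hvt.symm]) hle
    obtain ⟨p, hp, hsum⟩ := ih hflow (by rw [netOut_sub hle, hnet]; split_ifs <;> omega)
    refine ⟨Fin.cons l p, Fin.cases ⟨hc, hs, ht⟩ fun i =>
      (hp i).mono fun x y h => h.trans_le (Nat.sub_le _ _), fun x y => ?_⟩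
    have := hsum x y
    have := hle x y
    simp only [Fin.sum_univ_succ, Fin.cons_zero, Fin.cons_succ, Pi.sub_apply] at *
    omega

theorem sum_sum_pathFlow_eq_length_filter {l : List X} {s : X} (hs : l.head? = some s)
    {U : Finset X} (hsU : s ∉ U) :
    ∑ u ∈ U, ∑ x, pathFlow l x u = (l.filter (· ∈ U)).length := by
  obtain ⟨r, rfl⟩ := List.head?_eq_some_iff.1 hs
  simp [sum_pathFlow_right, List.sum_count_eq_length_filter, hsU]

theorem sum_length_filter_le_sum_inflow {ι : Type*} [Fintype ι] {p : ι → List X} {s : X}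
    (hs : ∀ i, (p i).head? = some s) {U : Finset X} (hsU : s ∉ U) {g : X → X → ℕ}
    (hle : ∀ x y, ∑ i, pathFlow (p i) x y ≤ g x y) :
    ∑ i, ((p i).filter (· ∈ U)).length ≤ ∑ u ∈ U, ∑ x, g x u :=
  calc ∑ i, ((p i).filter (· ∈ U)).length = ∑ i, ∑ u ∈ U, ∑ x, pathFlow (p i) x u :=
        sum_congr rfl fun i _ => (sum_sum_pathFlow_eq_length_filter (hs i) hsU).symm
    _ = ∑ u ∈ U, ∑ x, ∑ i, pathFlow (p i) x u := by
        rw [sum_comm]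
        exact sum_congr rfl fun u _ => sum_comm
    _ ≤ ∑ u ∈ U, ∑ x, g x u := sum_le_sum fun u _ => sum_le_sum fun x _ => hle x u

end Flow

theorem sum_le_one_of_ncard_setOf_eq_one {X : Type*} [Fintype X] {A : X → X → Prop}
    {f : X → X → ℕ} (hcap : ∀ x y, f x y ≤ 1) (hsupp : ∀ x y, ¬ A x y → f x y = 0)
    {u : X} (hu : {x | A x u}.ncard = 1) : ∑ x, f x u ≤ 1 := by
  obtain ⟨a, ha⟩ := Set.ncard_eq_one.1 hu
  have hunique : ∀ b, b ≠ a → f b u = 0 := fun b hb =>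
    hsupp b u fun hA => hb (by simpa [ha] using (show b ∈ {x | A x u} from hA))
  rw [Fintype.sum_eq_single a hunique]
  exact hcap a u

theorem residual_flow_bound_general {X : Type*} [Fintype X] [DecidableEq X]
    (A : X → X → Prop) (s t : X) (Uset : Finset X)
    (hsU : s ∉ Uset)
    (hin : ∀ u ∈ Uset, {x : X | A x u}.ncard = 1)
    (hUpath : ∀ l : List X, IsDipath A s t l →
      (l.length - 1 - 3) / 2 ≤ (l.filter (fun x => x ∈ Uset)).length)
    (d : ℕ) (hd : 4 < d)
    (hdist : ∀ l : List X, IsDipath A s t l → d ≤ l.length - 1)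
    (f : X → X → ℕ)
    (hcap : ∀ x y : X, f x y ≤ 1)
    (hsupp : ∀ x y : X, ¬ A x y → f x y = 0)
    (hcons : ∀ v : X, v ≠ s → v ≠ t → ∑ u : X, f u v = ∑ u : X, f v u) :
    ((∑ u : X, f s u : ℤ) - ∑ u : X, f u s) * ((d : ℤ) - 4)
      ≤ 2 * (Uset.card : ℤ) := by
  have hflow : IsFlow f s t := fun v hvs hvt => by
    simp only [netOut, ← Nat.cast_sum, hcons v hvs hvt, sub_self]
  rw [Nat.cast_sum]
  change netOut f s * ((d : ℤ) - 4) ≤ _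
  rcases le_or_gt (netOut f s) 0 with hval | hval
  · exact (mul_nonpos_of_nonpos_of_nonneg hval (by omega)).trans (by positivity)
  obtain ⟨p, hp, hle⟩ := hflow.exists_paths (netOut f s).toNat (by omega)
  have hlong : ∀ i, (d : ℤ) - 4 ≤ 2 * ((p i).filter (· ∈ Uset)).length := fun i => by
    have hA := (hp i).mono fun x y h => by_contra fun hxy => h.ne' (hsupp x y hxy)
    have := hUpath _ hA
    have := hdist _ hA
    omega
  have hU : ∑ i, ((p i).filter (· ∈ Uset)).length ≤ Uset.card :=
    (sum_length_filter_le_sum_inflow (fun i => (hp i).2.1) hsU hle).trans <|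
      (sum_le_sum fun u hu => sum_le_one_of_ncard_setOf_eq_one hcap hsupp (hin u hu)).trans
        (by simp)
  calc netOut f s * ((d : ℤ) - 4) = ∑ _ : Fin (netOut f s).toNat, ((d : ℤ) - 4) := by
        rw [sum_const, card_univ, Fintype.card_fin, nsmul_eq_mul, Int.toNat_of_nonneg hval.le]
    _ ≤ ∑ i, 2 * (((p i).filter (· ∈ Uset)).length : ℤ) := sum_le_sum fun i _ => hlong i
    _ ≤ 2 * (Uset.card : ℤ) := by
        rw [← mul_sum]
        exact_mod_cast Nat.mul_le_mul_left 2 hU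

/-- In the residual graph of the semi-matching flow network (unit capacities,
job vertices `U` of in-degree `1`, every `s`-`t` path of `ℓ` edges containing at
least `⌊(ℓ-3)/2⌋` vertices of `U`), if every `s`-`t` path has length at least
`d > 4` then the maximum residual flow value is at most `2|U|/(d-4)`. -/
theorem residual_flow_bound {X : Type*} [Fintype X] [DecidableEq X]
    (A : X → X → Prop) (s t : X) (hst : s ≠ t) (Uset : Finset X)
    (hsU : s ∉ Uset) (htU : t ∉ Uset)
    (hin : ∀ u ∈ Uset, {x : X | A x u}.ncard = 1)
    (hUpath : ∀ l : List X, IsDipath A s t l →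
      (l.length - 1 - 3) / 2 ≤ (l.filter (fun x => x ∈ Uset)).length)
    (d : ℕ) (hd : 4 < d)
    (hdist : ∀ l : List X, IsDipath A s t l → d ≤ l.length - 1)
    (f : X → X → ℕ)
    (hcap : ∀ x y : X, f x y ≤ 1)
    (hsupp : ∀ x y : X, ¬ A x y → f x y = 0)
    (hcons : ∀ v : X, v ≠ s → v ≠ t → ∑ u : X, f u v = ∑ u : X, f v u) :
    ((∑ u : X, f s u : ℤ) - ∑ u : X, f u s) * ((d : ℤ) - 4)
      ≤ 2 * (Uset.card : ℤ) :=
  residual_flow_bound_general A s t Uset hsU hin hUpath d hd hdist f hcap hsupp hcons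
end

section
/- In Dinitz's blocking flow algorithm on a unit-capacity network, if d_i denotes the s-t distance in the residual graph at the start of iteration i, then d_{i+1} > d_i; that is, augmenting by a blocking flow along shortest paths strictly increases the source-sink distance in the residual graph. -/
/-! Let `δ x` be the distance from `s` to `x` in the old residual graph. An edge of the new
residual graph is either an unsaturated old edge, along which `δ` grows by at most one, or
the reversal of an edge carrying flow, along which `δ` drops by one because the flow lives on
the layered graph. Hence every new `s`-`t` path has at least `δ t` edges, and if it has exactly
`δ t` edges then each of them raises `δ` by one, so it is a shortest old path none of whose
edges is saturated, which the blocking property forbids. -/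

open Finset

/-- Residual capacity of an integral flow `f` in a network with capacities `c`. -/
def resCap {X : Type*} (c f : X → X → ℕ) (x y : X) : ℕ := c x y - f x y + f y x

/-- Residual adjacency. -/
def resAdj {X : Type*} (c f : X → X → ℕ) (x y : X) : Prop := 0 < resCap c f x y

/-- The set of lengths (numbers of edges) of directed `a`-`b` paths. -/
def pathLens {X : Type*} (A : X → X → Prop) (a b : X) : Set ℕ :=
  {n | ∃ l : List X, IsDipath A a b l ∧ n + 1 = l.length}


section Augmentation

variable {X : Type*}

namespace IsDipath

variable {A R : X → X → Prop} {s x y z : X} {l : List X}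

lemma singleton (A : X → X → Prop) (s : X) : IsDipath A s s [s] :=
  ⟨List.isChain_singleton s, rfl, rfl⟩

lemma append_singleton (h : IsDipath A s x l) (hxy : A x y) : IsDipath A s y (l ++ [y]) := by
  obtain ⟨hc, hh, hl⟩ := h
  have hne : l ≠ [] := by rintro rfl; simp at hh
  refine ⟨hc.append (List.isChain_singleton y) ?_, by rwa [List.head?_append_of_ne_nil _ hne],
    by simp⟩
  simp only [hl, Option.mem_def, Option.some.injEq, List.head?_cons]
  rintro _ rfl _ rfl
  exact hxy

lemma mono_s11 (hAR : ∀ x y, A x y → R x y) (h : IsDipath A s x l) : IsDipath R s x l :=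
  ⟨h.1.imp fun _ _ => hAR _ _, h.2⟩

lemma rel_of_infix (h : IsDipath A s x l) (hyz : [y, z] <:+: l) : A y z :=
  List.isChain_pair.1 (h.1.infix hyz)

theorem induction_append_singleton {motive : X → List X → Prop} (single : motive s [s])
    (snoc : ∀ w y l, IsDipath A s w l → A w y → motive w l → motive y (l ++ [y]))
    (h : IsDipath A s x l) : motive x l := by
  induction l using List.reverseRecOn generalizing x with
  | nil => simp [IsDipath] at h
  | append_singleton l z ih =>
    obtain ⟨hc, hh, hl⟩ := h
    obtain rfl : z = x := by simpa using hl
    rcases l.eq_nil_or_concat' with rfl | ⟨l, w, rfl⟩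
    · obtain rfl : z = s := by simpa using hh
      exact single
    · obtain ⟨hc, -, hwz⟩ := List.isChain_append.1 hc
      have hp : IsDipath A s w (l ++ [w]) := ⟨hc, by simpa using hh, by simp⟩
      exact snoc w z _ hp (hwz w (by simp) z (by simp)) (ih hp)

end IsDipath

-- Since `sInf ∅ = 0`, unreachable vertices get distance `0`; this is why the bounds below
-- carry reachability along.
noncomputable def pathDist (A : X → X → Prop) (a b : X) : ℕ := sInf (pathLens A a b)

section PathDist

variable {A : X → X → Prop} {s x y : X}

lemma zero_mem_pathLens_self : 0 ∈ pathLens A s s := ⟨[s], .singleton A s, rfl⟩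

lemma pathDist_self : pathDist A s s = 0 :=
  Nat.sInf_eq_zero.2 (Or.inl zero_mem_pathLens_self)

lemma pathDist_succ_mem_pathLens (hx : (pathLens A s x).Nonempty) (hxy : A x y) :
    pathDist A s x + 1 ∈ pathLens A s y := by
  obtain ⟨l, hl, hlen⟩ := Nat.sInf_mem hx
  exact ⟨l ++ [y], hl.append_singleton hxy, by simp [pathDist, hlen]⟩

end PathDist

lemma resAdj_iff {c f : X → X → ℕ} {x y : X} : resAdj c f x y ↔ f x y < c x y ∨ 0 < f y x := by
  unfold resAdj resCap
  omega

lemma exists_pos_inflow_of_pos_outflow [Fintype X] {g : X → X → ℕ} {v w : X}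
    (hcons : ∑ u, g u v = ∑ u, g v u) (hw : 0 < g v w) : ∃ u, 0 < g u v := by
  have hin : 0 < ∑ u, g u v :=
    hcons ▸ hw.trans_le (single_le_sum (fun _ _ => Nat.zero_le _) (mem_univ w))
  obtain ⟨u, -, hu⟩ := sum_pos_iff.1 hin
  exact ⟨u, hu⟩

structure IsLayeredFlow [Fintype X] (r g : X → X → ℕ) (s t : X) : Prop where
  conservation : ∀ v, v ≠ s → v ≠ t → ∑ u, g u v = ∑ u, g v u
  layered : ∀ x y, 0 < g x y → pathDist (0 < r · ·) s x + 1 = pathDist (0 < r · ·) s y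
  reachable : (pathLens (0 < r · ·) s t).Nonempty

namespace IsLayeredFlow

variable [Fintype X] {r g : X → X → ℕ} {s t x y : X} {l : List X}

lemma pathLens_nonempty_of_pos (hg : IsLayeredFlow r g s t) (hxy : 0 < g x y) :
    (pathLens (0 < r · ·) s x).Nonempty := by
  by_cases hxs : x = s
  · exact hxs ▸ ⟨0, zero_mem_pathLens_self⟩
  by_cases hxt : x = t
  · exact hxt ▸ hg.reachable
  obtain ⟨u, hu⟩ := exists_pos_inflow_of_pos_outflow (hg.conservation x hxs hxt) hxy
  exact Nat.nonempty_of_sInf_eq_succ (hg.layered u x hu).symm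

lemma pathLens_nonempty_and_pathDist_le_succ_of_resAdj (hg : IsLayeredFlow r g s t)
    (hx : (pathLens (0 < r · ·) s x).Nonempty) (hxy : resAdj r g x y) :
    (pathLens (0 < r · ·) s y).Nonempty ∧
      pathDist (0 < r · ·) s y ≤ pathDist (0 < r · ·) s x + 1 := by
  rcases resAdj_iff.1 hxy with hlt | hpos
  · have hmem := pathDist_succ_mem_pathLens hx (Nat.zero_lt_of_lt hlt)
    exact ⟨⟨_, hmem⟩, Nat.sInf_le hmem⟩
  · have := hg.layered y x hpos
    exact ⟨hg.pathLens_nonempty_of_pos hpos, by omega⟩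

lemma lt_of_resAdj_of_pathDist_eq_succ (hg : IsLayeredFlow r g s t) (hxy : resAdj r g x y)
    (h : pathDist (0 < r · ·) s y = pathDist (0 < r · ·) s x + 1) : g x y < r x y := by
  refine (resAdj_iff.1 hxy).resolve_right fun hpos => ?_
  have := hg.layered y x hpos
  omega

lemma pathLens_nonempty_and_pathDist_succ_le_length (hg : IsLayeredFlow r g s t)
    (hl : IsDipath (resAdj r g) s x l) :
    (pathLens (0 < r · ·) s x).Nonempty ∧ pathDist (0 < r · ·) s x + 1 ≤ l.length := by
  refine IsDipath.induction_append_singleton (motive := fun x l =>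
      (pathLens (0 < r · ·) s x).Nonempty ∧ pathDist (0 < r · ·) s x + 1 ≤ l.length)
    ⟨⟨0, zero_mem_pathLens_self⟩, by simp [pathDist_self]⟩ ?_ hl
  rintro w y l - hwy ⟨hw, hle⟩
  obtain ⟨hy, hyw⟩ := hg.pathLens_nonempty_and_pathDist_le_succ_of_resAdj hw hwy
  exact ⟨hy, by simp only [List.length_append, List.length_singleton]; omega⟩

lemma isDipath_unsaturated_of_pathDist_succ_eq_length (hg : IsLayeredFlow r g s t)
    (hl : IsDipath (resAdj r g) s x l) :
    pathDist (0 < r · ·) s x + 1 = l.length → IsDipath (fun u v => g u v < r u v) s x l := by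
  refine IsDipath.induction_append_singleton (motive := fun x l =>
      pathDist (0 < r · ·) s x + 1 = l.length → IsDipath (fun u v => g u v < r u v) s x l)
    (fun _ => .singleton _ s) ?_ hl
  intro w y l hwl hwy ih heq
  obtain ⟨hw, hle⟩ := hg.pathLens_nonempty_and_pathDist_succ_le_length hwl
  have hyw := (hg.pathLens_nonempty_and_pathDist_le_succ_of_resAdj hw hwy).2
  simp only [List.length_append, List.length_singleton] at heq
  exact (ih (by omega)).append_singleton (hg.lt_of_resAdj_of_pathDist_eq_succ hwy (by omega))

end IsLayeredFlow

end Augmentation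

theorem blocking_flow_increases_distance_general {X : Type*} [Fintype X]
    (c : X → X → ℕ) (s t : X) (f : X → X → ℕ) (g : X → X → ℕ)
    (hgcons : ∀ v : X, v ≠ s → v ≠ t → ∑ u : X, g u v = ∑ u : X, g v u)
    (hlayer : ∀ x y : X, 0 < g x y →
      sInf (pathLens (resAdj c f) s x) + 1 = sInf (pathLens (resAdj c f) s y))
    (hblocking : ∀ l : List X, IsDipath (resAdj c f) s t l →
      l.length = sInf (pathLens (resAdj c f) s t) + 1 →
      ∃ x y : X, [x, y] <:+: l ∧ g x y = resCap c f x y)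
    (hreach : (pathLens (resAdj c f) s t).Nonempty) :
    ∀ l' : List X, IsDipath (resAdj (resCap c f) g) s t l' →
      sInf (pathLens (resAdj c f) s t) + 1 < l'.length := by
  have hg : IsLayeredFlow (resCap c f) g s t := ⟨hgcons, hlayer, hreach⟩
  intro l hl
  refine (hg.pathLens_nonempty_and_pathDist_succ_le_length hl).2.lt_of_ne fun hlen => ?_
  have hunsat := hg.isDipath_unsaturated_of_pathDist_succ_eq_length hl hlen
  obtain ⟨x, y, hxy, hsat⟩ :=
    hblocking l (hunsat.mono_s11 fun _ _ => Nat.zero_lt_of_lt) hlen.symm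
  exact (hunsat.rel_of_infix hxy).ne hsat

/-- Distance monotonicity for blocking flows in a unit-capacity network: after
augmenting by a blocking flow `g` supported on shortest-path (layered) edges of
the residual graph of `f`, every `s`-`t` path in the new residual graph is
strictly longer than the previous `s`-`t` distance, i.e. `d_{i+1} > d_i`. -/
theorem blocking_flow_increases_distance {X : Type*} [Fintype X] [DecidableEq X]
    (c : X → X → ℕ) (hc : ∀ x y, c x y ≤ 1) (s t : X) (hst : s ≠ t)
    (f : X → X → ℕ) (hf : ∀ x y, f x y ≤ c x y)
    (hfcons : ∀ v : X, v ≠ s → v ≠ t → ∑ u : X, f u v = ∑ u : X, f v u)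
    (g : X → X → ℕ) (hg : ∀ x y, g x y ≤ resCap c f x y)
    (hgcons : ∀ v : X, v ≠ s → v ≠ t → ∑ u : X, g u v = ∑ u : X, g v u)
    (hlayer : ∀ x y : X, 0 < g x y →
      sInf (pathLens (resAdj c f) s x) + 1 = sInf (pathLens (resAdj c f) s y))
    (hblocking : ∀ l : List X, IsDipath (resAdj c f) s t l →
      l.length = sInf (pathLens (resAdj c f) s t) + 1 →
      ∃ x y : X, [x, y] <:+: l ∧ g x y = resCap c f x y)
    (hreach : (pathLens (resAdj c f) s t).Nonempty) :
    ∀ l' : List X, IsDipath (resAdj (resCap c f) g) s t l' →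
      sInf (pathLens (resAdj c f) s t) + 1 < l'.length :=
  blocking_flow_increases_distance_general c s t f g hgcons hlayer hblocking hreach
end

section
/- Let M be a semi-matching in a bipartite graph, viewed as a function M : U → V, and suppose there is an alternating path v_0, u_1, v_1, u_2, v_2, ..., u_k, v_k where each u_i is matched to v_{i-1} in M, each u_i is adjacent to v_i in G, and deg_M(v_k) ≤ deg_M(v_0) - 2. Then the semi-matching M' obtained by reassigning each u_i from v_{i-1} to v_i has strictly smaller unweighted cost than M: ∑_v deg_{M'}(v)(deg_{M'}(v)+1)/2 < ∑_v deg_M(v)(deg_M(v)+1)/2. -/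
open Finset

/-- Degree of a machine `v` under a semi-matching `M : U → V`. -/
def smDeg {U V : Type*} [Fintype U] [DecidableEq V] (M : U → V) (v : V) : ℕ :=
  (Finset.univ.filter (fun u => M u = v)).card

/-- Unweighted cost of a semi-matching. -/
def smCost {U V : Type*} [Fintype U] [Fintype V] [DecidableEq V] (M : U → V) : ℕ :=
  ∑ v : V, smDeg M v * (smDeg M v + 1) / 2

/-!
Reassigning the jobs of the path changes no machine degree except that of `v₀`, which drops by
one, and that of `v_k`, which grows by one. Since the triangle numbers satisfy
`T(n + 1) = T(n) + (n + 1)`, the cost changes by `-deg_M(v₀) + (deg_M(v_k) + 1) < 0`.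
-/

theorem Nat.succ_mul_succ_add_one_div_two (n : ℕ) :
    (n + 1) * (n + 1 + 1) / 2 = n * (n + 1) / 2 + (n + 1) := by
  rw [show (n + 1) * (n + 1 + 1) = n * (n + 1) + (n + 1) * 2 by ring,
    Nat.add_mul_div_right _ _ two_pos]

theorem Fin.sum_castSucc_add_last_eq_zero_add_sum_succ {M : Type*} [AddCommMonoid M] {k : ℕ}
    (f : Fin (k + 1) → M) :
    ∑ i : Fin k, f i.castSucc + f (Fin.last k) = f 0 + ∑ i : Fin k, f i.succ := by
  rw [← Fin.sum_univ_castSucc, Fin.sum_univ_succ]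

theorem sum_triangle_lt_of_move {V : Type*} [Fintype V] [DecidableEq V] (d d' : V → ℕ)
    {a b : V} (hmove : ∀ w, d' w + (if a = w then 1 else 0) = d w + (if b = w then 1 else 0))
    (hab : d b + 2 ≤ d a) :
    ∑ w, d' w * (d' w + 1) / 2 < ∑ w, d w * (d w + 1) / 2 := by
  have hne : a ≠ b := by
    rintro rfl
    omega
  have hpoint : ∀ w, d' w * (d' w + 1) / 2 + (if a = w then d a else 0)
      = d w * (d w + 1) / 2 + (if b = w then d b + 1 else 0) := by
    intro w
    have hw := hmove w
    by_cases haw : a = w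
    · subst haw
      obtain ⟨n, hn⟩ : ∃ n, d a = n + 1 := ⟨d a - 1, by omega⟩
      have hd' : d' a = n := by rw [if_pos rfl, if_neg hne.symm] at hw; omega
      simp [hne.symm, hd', hn, Nat.succ_mul_succ_add_one_div_two]
    by_cases hbw : b = w
    · subst hbw
      have hd' : d' b = d b + 1 := by simpa [hne] using hw
      simp [hne, hd', Nat.succ_mul_succ_add_one_div_two, add_assoc]
    · simp only [haw, hbw, if_false, add_zero] at hw ⊢
      rw [hw]
  have hsum := sum_congr rfl fun w (_ : w ∈ univ) => hpoint w
  rw [sum_add_distrib, sum_add_distrib, sum_ite_eq, sum_ite_eq] at hsum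
  simp only [mem_univ, if_true] at hsum
  omega

theorem smDeg_add_sum_eq_of_eq_off_range {U V : Type*} [Fintype U] [DecidableEq V] {k : ℕ}
    {u : Fin k → U} (hu : Function.Injective u) {M M' : U → V}
    (hrest : ∀ x : U, (∀ i : Fin k, u i ≠ x) → M' x = M x) (w : V) :
    smDeg M' w + ∑ i, (if M (u i) = w then 1 else 0)
      = smDeg M w + ∑ i, (if M' (u i) = w then 1 else 0) := by
  classical
  have hsplit : ∀ N : U → V, smDeg N w = ∑ i, (if N (u i) = w then 1 else 0)
      + ∑ x ∈ univ \ univ.image u, (if N x = w then 1 else 0) := fun N => by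
    rw [smDeg, card_filter, ← sum_sdiff (subset_univ (univ.image u)),
      sum_image fun _ _ _ _ h => hu h, add_comm]
  have hoff : ∑ x ∈ univ \ univ.image u, (if M' x = w then 1 else 0)
      = ∑ x ∈ univ \ univ.image u, (if M x = w then 1 else 0) := by
    refine sum_congr rfl fun x hx => ?_
    rw [hrest x fun i hi => (mem_sdiff.1 hx).2 (mem_image.2 ⟨i, mem_univ i, hi⟩)]
  rw [hsplit M', hsplit M, hoff]
  ring

theorem augment_along_cost_reducing_path_general {U V : Type*} [Fintype U] [Fintype V] [DecidableEq V]
    (M : U → V)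
    (k : ℕ) (v : Fin (k + 1) → V) (u : Fin k → U)
    (hu_inj : Function.Injective u)
    (hmatch : ∀ i : Fin k, M (u i) = v i.castSucc)
    (hdeg : smDeg M (v (Fin.last k)) + 2 ≤ smDeg M (v 0))
    (M' : U → V)
    (hM'path : ∀ i : Fin k, M' (u i) = v i.succ)
    (hM'rest : ∀ x : U, (∀ i : Fin k, u i ≠ x) → M' x = M x) :
    smCost M' < smCost M := by
  refine sum_triangle_lt_of_move (smDeg M) (smDeg M') (fun w => ?_) hdeg
  have hcount := smDeg_add_sum_eq_of_eq_off_range hu_inj hM'rest w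
  have hpath := Fin.sum_castSucc_add_last_eq_zero_add_sum_succ fun j => if v j = w then 1 else 0
  simp only [hmatch, hM'path] at hcount
  omega

/-- Augmenting along an alternating path `v_0, u_1, v_1, …, u_k, v_k` with
`deg_M(v_k) ≤ deg_M(v_0) - 2` strictly decreases the unweighted cost. -/
theorem augment_along_cost_reducing_path {U V : Type*} [Fintype U] [Fintype V] [DecidableEq V]
    (adj : U → V → Prop) (M : U → V) (hM : ∀ u, adj u (M u))
    (k : ℕ) (hk : 1 ≤ k) (v : Fin (k + 1) → V) (u : Fin k → U)
    (hu_inj : Function.Injective u)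
    (hmatch : ∀ i : Fin k, M (u i) = v i.castSucc)
    (hadj : ∀ i : Fin k, adj (u i) (v i.succ))
    (hdeg : smDeg M (v (Fin.last k)) + 2 ≤ smDeg M (v 0))
    (M' : U → V)
    (hM'path : ∀ i : Fin k, M' (u i) = v i.succ)
    (hM'rest : ∀ x : U, (∀ i : Fin k, u i ≠ x) → M' x = M x) :
    smCost M' < smCost M :=
  augment_along_cost_reducing_path_general M k v u hu_inj hmatch hdeg M' hM'path hM'rest
end

section
/- Let M be a maximum matching of the bipartite graph Ĝ obtained from G = (U ∪ V, E) by the exploding reduction (each v ∈ V is replaced by copies v^1, ..., v^{deg(v)} and edge uv of weight w gets copies uv^i of weight i·w), such that M has minimum total weight. Then M uses, for each u ∈ U, only edges among its |U| smallest-weight incident edges in Ĝ; i.e., restricting Ĝ to the |U| smallest edges at each u ∈ U preserves the minimum-weight maximum matching value. -/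
open Finset

variable {U V : Type*}

/-- A matching in a bipartite graph given by `adj`, as a finite set of pairs. -/
def IsBMatching {A B : Type*} (adj : A → B → Prop) (M : Finset (A × B)) : Prop :=
  (∀ p ∈ M, adj p.1 p.2) ∧
    ∀ p ∈ M, ∀ q ∈ M, (p.1 = q.1 ∨ p.2 = q.2) → p = q

/-- Degree of a machine `v` in the bipartite graph. -/
def bDeg [Fintype U] (adj : U → V → Prop) [∀ u v, Decidable (adj u v)] (v : V) : ℕ :=
  (Finset.univ.filter fun u => adj u v).card

/-- The vertex set `V̂` of the exploded graph `Ĝ`: each machine `v` is replaced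
by `deg(v)` copies. -/
def VHat [Fintype U] (adj : U → V → Prop) [∀ u v, Decidable (adj u v)] : Type _ :=
  Σ v : V, Fin (bDeg adj v)

/-- Adjacency in the exploded graph `Ĝ`. -/
def adjHat [Fintype U] (adj : U → V → Prop) [∀ u v, Decidable (adj u v)]
    (u : U) (x : VHat adj) : Prop := adj u x.1

/-- Edge weights of `Ĝ`: the `i`-th copy of edge `uv` has weight `i · w_{uv}`
(copies numbered `1, …, deg(v)`). -/
def wHat [Fintype U] (adj : U → V → Prop) [∀ u v, Decidable (adj u v)]
    (w : U → V → ℝ) (u : U) (x : VHat adj) : ℝ := ((x.2 : ℕ) + 1) * w u x.1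

instance [Fintype U] [Fintype V] (adj : U → V → Prop) [∀ u v, Decidable (adj u v)] :
    Fintype (VHat adj) := by unfold VHat; infer_instance

instance [Fintype U] [DecidableEq V] (adj : U → V → Prop) [∀ u v, Decidable (adj u v)] :
    DecidableEq (VHat adj) := by unfold VHat; exact inferInstance

/-- A minimum-weight maximum matching of the exploded graph `Ĝ` uses, at each
job `u`, only edges among the `|U|` smallest-weight edges incident to `u`:
for every matched edge, fewer than `|U|` incident edges have strictly smaller
weight. -/
theorem min_weight_max_matching_uses_smallest_edges
    [Fintype U] [Fintype V] [DecidableEq U] [DecidableEq V]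
    (adj : U → V → Prop) [∀ u v, Decidable (adj u v)] (w : U → V → ℝ)
    (M : Finset (U × VHat adj))
    (hM : IsBMatching (adjHat adj) M)
    (hmax : ∀ M' : Finset (U × VHat adj), IsBMatching (adjHat adj) M' →
      M'.card ≤ M.card)
    (hminw : ∀ M' : Finset (U × VHat adj), IsBMatching (adjHat adj) M' →
      M'.card = M.card →
      ∑ p ∈ M, wHat adj w p.1 p.2 ≤ ∑ p ∈ M', wHat adj w p.1 p.2) :
    ∀ p ∈ M,
      {y : VHat adj | adjHat adj p.1 y ∧ wHat adj w p.1 y < wHat adj w p.1 p.2}.ncard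
        < Fintype.card U := by
  classical
  intro p hp
  by_contra hlt
  push_neg at hlt
  set S : Set (VHat adj) :=
    {y : VHat adj | adjHat adj p.1 y ∧ wHat adj w p.1 y < wHat adj w p.1 p.2} with hS
  have hSfin : S.Finite := Set.toFinite _
  set T : Finset (VHat adj) := hSfin.toFinset with hTdef
  have hTcard : Fintype.card U ≤ T.card := by
    rwa [Set.ncard_eq_toFinset_card S hSfin] at hlt
  -- M.card ≤ |U|
  have hinjfst : Set.InjOn Prod.fst (M : Set (U × VHat adj)) := by
    intro a ha b hb hab
    exact hM.2 a ha b hb (Or.inl hab)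
  have hMcard : M.card ≤ Fintype.card U := by
    calc M.card = (M.image Prod.fst).card := (Finset.card_image_of_injOn hinjfst).symm
    _ ≤ Fintype.card U := by
        simpa using Finset.card_le_card (Finset.subset_univ (M.image Prod.fst))
  have hxT : p.2 ∉ T := by
    simp only [hTdef, Set.Finite.mem_toFinset, hS, Set.mem_setOf_eq]
    rintro ⟨-, h⟩; exact lt_irrefl _ h
  have hxImg : p.2 ∈ M.image Prod.snd := Finset.mem_image_of_mem _ hp
  -- find unmatched y ∈ T
  have hex : ∃ y ∈ T, y ∉ M.image Prod.snd := by
    by_contra hno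
    push_neg at hno
    have hsub : T ⊆ (M.image Prod.snd).erase p.2 := by
      intro y hy
      exact Finset.mem_erase.mpr ⟨fun h => hxT (h ▸ hy), hno y hy⟩
    have h1 : T.card ≤ (M.image Prod.snd).card - 1 := by
      have := Finset.card_le_card hsub
      rwa [Finset.card_erase_of_mem hxImg] at this
    have h2 : (M.image Prod.snd).card ≤ M.card := Finset.card_image_le
    have hpos : 1 ≤ (M.image Prod.snd).card := Finset.card_pos.mpr ⟨p.2, hxImg⟩
    omega
  obtain ⟨y, hyT, hyM⟩ := hex
  have hyS : adjHat adj p.1 y ∧ wHat adj w p.1 y < wHat adj w p.1 p.2 := by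
    have := hyT
    rw [hTdef, Set.Finite.mem_toFinset] at this
    exact this
  -- swapped matching
  set q : U × VHat adj := (p.1, y) with hq
  have hqnot : q ∉ M := fun h => hyM (Finset.mem_image_of_mem Prod.snd h)
  have hqnot' : q ∉ M.erase p := fun h => hqnot (Finset.mem_of_mem_erase h)
  set M' : Finset (U × VHat adj) := insert q (M.erase p) with hM'
  have hmatch : IsBMatching (adjHat adj) M' := by
    constructor
    · intro r hr
      rcases Finset.mem_insert.mp hr with h | h
      · rw [h]; exact hyS.1
      · exact hM.1 r (Finset.mem_of_mem_erase h)
    · intro r hr s hs hshare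
      rcases Finset.mem_insert.mp hr with h1 | h1 <;>
        rcases Finset.mem_insert.mp hs with h2 | h2
      · rw [h1, h2]
      · exfalso
        subst h1
        have hsM := Finset.mem_of_mem_erase h2
        rcases hshare with h | h
        · have : s = p := hM.2 s hsM p hp (Or.inl (h.symm))
          exact (Finset.mem_erase.mp h2).1 this
        · exact hyM (by rw [show y = q.2 from rfl, h]; exact Finset.mem_image_of_mem Prod.snd hsM)
      · exfalso
        subst h2
        have hrM := Finset.mem_of_mem_erase h1
        rcases hshare with h | h
        · have : r = p := hM.2 r hrM p hp (Or.inl h)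
          exact (Finset.mem_erase.mp h1).1 this
        · exact hyM (by rw [show y = q.2 from rfl, ← h]; exact Finset.mem_image_of_mem Prod.snd hrM)
      · exact hM.2 r (Finset.mem_of_mem_erase h1) s (Finset.mem_of_mem_erase h2) hshare
  have hMpos : 1 ≤ M.card := Finset.card_pos.mpr ⟨p, hp⟩
  have hcard : M'.card = M.card := by
    rw [hM', Finset.card_insert_of_notMem hqnot', Finset.card_erase_of_mem hp]
    omega
  have hsum : ∑ r ∈ M', wHat adj w r.1 r.2
      = ∑ r ∈ M, wHat adj w r.1 r.2 - wHat adj w p.1 p.2 + wHat adj w p.1 y := by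
    rw [hM', Finset.sum_insert hqnot', Finset.sum_erase_eq_sub hp]
    ring
  have := hminw M' hmatch hcard
  rw [hsum] at this
  linarith [hyS.2]
end
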